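/- (Corollary of Lemma 3.4 with λ = μ, z₁ = x, z₂ = x⁻¹: the tangent weights of the Hilbert scheme at a monomial ideal are {h(□), −h(□)}.) Let λ be a partition and let x be a complex number with |x| > 1. Then ∑_{i=1}^{ℓ(λ)} ∑_{j=1}^{∞} (x^{λ_i} − 1)·x^{1−j}·x^{λ^t_j − i} + ∑_{j=1}^{λ_1} ∑_{i=1}^{∞} (x^{λ^t_j} − 1)·x^{1−j}·x^{−i} = ∑_{□∈λ} (x^{h(□)} + x^{−h(□)}), where both double series converge absolutely. -/

import Mathlib

/-- A partition: a weakly decreasing sequence of nonnegative integers with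
finitely many nonzero terms (encoded as a finitely supported function,
`parts i` being the `(i+1)`-st part). -/
structure Ptn where
  parts : ℕ →₀ ℕ
  antitone' : ∀ ⦃i j : ℕ⦄, i ≤ j → parts j ≤ parts i

namespace Ptn

/-- The size `|μ| = ∑ μ_i`. -/
def size (μ : Ptn) : ℕ := μ.parts.sum fun _ v => v

/-- The diagram of `μ`, as a finset of (0-indexed) cells `(i, j)` with `j < μ.parts i`;
the cell `(i, j)` corresponds to the 1-indexed cell `(i+1, j+1)`. -/
def cells (μ : Ptn) : Finset (ℕ × ℕ) :=
  (Finset.range (μ.size + 1) ×ˢ Finset.range (μ.size + 1)).filter fun c => c.2 < μ.parts c.1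

/-- The transpose partition evaluated at the (0-indexed) column `j`:
`μ.conj j = #{i : μ_i ≥ j+1}`. -/
def conj (μ : Ptn) (j : ℕ) : ℕ :=
  ((Finset.range (μ.size + 1)).filter fun i => j < μ.parts i).card

/-- The number of (nonzero) parts `ℓ(μ)`. -/
def len (μ : Ptn) : ℕ := μ.conj 0

/-- The (generalized, possibly negative) arm length of the 0-indexed cell `c`. -/
def arm (lam : Ptn) (c : ℕ × ℕ) : ℤ := (lam.parts c.1 : ℤ) - c.2 - 1

/-- The (generalized, possibly negative) leg length of the 0-indexed cell `c`. -/
def leg (mu : Ptn) (c : ℕ × ℕ) : ℤ := (mu.conj c.2 : ℤ) - c.1 - 1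

/-- The hook length of a cell. -/
def hook (μ : Ptn) (c : ℕ × ℕ) : ℤ := μ.arm c + μ.leg c + 1

end Ptn


/-!
Put `V = ∑_{(i,j) ∈ λ} x^{i-j}` and `V' = ∑_{(i,j) ∈ λ} x^{j-i}`. Each double series is geometric
in its inner index, and `∑_j x^{λᵗ_j - j}` differs from `∑_j x^{-j}` by `(x - 1) V` (sum over the
cells column by column), so the left-hand side equals `(1 - x⁻¹) V' (x / (x - 1) + (x - 1) V) + V`.
The hook side equals `V + V' - (x - 1)(x⁻¹ - 1) V V'`; this is proved for the first `n` rows by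
induction on `n`: adding a row of length `m` lengthens by one the legs of the cells above it in
the first `m` columns, and both sides change by products of finite geometric sums.
-/

open Finset

def IsConjugate (p c : ℕ → ℕ) : Prop := ∀ i j, i < c j ↔ j < p i

namespace IsConjugate

variable {p c : ℕ → ℕ}

theorem symm (h : IsConjugate p c) : IsConjugate c p := fun i j => (h j i).symm

theorem antitone (h : IsConjugate p c) : Antitone p := fun i i' hi =>
  le_of_forall_lt fun j hj => (h i j).mp (lt_of_le_of_lt hi ((h i' j).mpr hj))

end IsConjugate

section CharacterIdentity

variable {K : Type*} [Field K] (x : K) (p c : ℕ → ℕ) (n : ℕ)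

def contentSum : K := ∑ i ∈ range n, ∑ j ∈ range (p i), x ^ ((i : ℤ) - j)

-- `min n (c j)` is the length of column `j` in the first `n` rows of the shape.
def hookSum : K :=
  ∑ i ∈ range n, ∑ j ∈ range (p i), x ^ ((p i : ℤ) + (min n (c j) : ℕ) - i - j - 1)

variable {x}

theorem inv_sub_one_mul_sum_zpow_neg (n : ℕ) :
    (x⁻¹ - 1) * ∑ i ∈ range n, x ^ (-(i : ℤ)) = x ^ (-(n : ℤ)) - 1 := by
  simp only [zpow_neg, zpow_natCast, ← inv_pow]
  rw [mul_comm, geom_sum_mul]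

theorem sub_one_mul_contentSum_inv (hx : x ≠ 0) :
    (x - 1) * contentSum x⁻¹ p n
      = ∑ i ∈ range n, (x ^ ((p i : ℤ) - i) - x ^ (-(i : ℤ))) := by
  rw [contentSum, mul_sum]
  refine sum_congr rfl fun i _ => ?_
  have hrow : ∑ j ∈ range (p i), x⁻¹ ^ ((i : ℤ) - j)
      = x ^ (-(i : ℤ)) * ∑ j ∈ range (p i), x ^ j := by
    rw [mul_sum]
    refine sum_congr rfl fun j _ => ?_
    rw [inv_zpow', neg_sub, zpow_sub₀ hx, zpow_natCast, zpow_neg, div_eq_mul_inv, mul_comm]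
  rw [hrow, mul_left_comm, mul_comm (x - 1), geom_sum_mul, mul_sub, ← zpow_natCast,
    ← zpow_add₀ hx, mul_one, neg_add_eq_sub]

theorem contentSum_succ (hx : x ≠ 0) :
    contentSum x p (n + 1)
      = contentSum x p n + x ^ (n : ℤ) * ∑ j ∈ range (p n), x ^ (-(j : ℤ)) := by
  rw [contentSum, sum_range_succ, mul_sum]
  congr 1
  exact sum_congr rfl fun j _ => by rw [← zpow_add₀ hx, sub_eq_add_neg]

namespace IsConjugate

variable {p c} (h : IsConjugate p c)
include h

theorem min_succ_eq_of_lt {j : ℕ} (hj : j < p n) : min (n + 1) (c j) = n + 1 :=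
  min_eq_left ((h n j).mpr hj)

theorem min_eq_of_le {j k : ℕ} (hj : p n ≤ j) (hk : n ≤ k) : min k (c j) = c j :=
  min_eq_right (by have := mt (h n j).mp (not_lt.mpr hj); omega)

theorem sum_row_succ (hx : x ≠ 0) {i : ℕ} (hi : i < n) :
    ∑ j ∈ range (p i), x ^ ((p i : ℤ) + (min (n + 1) (c j) : ℕ) - i - j - 1)
      = ∑ j ∈ range (p i), x ^ ((p i : ℤ) + (min n (c j) : ℕ) - i - j - 1)
        + x ^ ((p i : ℤ) - i) * x ^ (n : ℤ) * (1 - x⁻¹) * ∑ j ∈ range (p n), x ^ (-(j : ℤ)) := by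
  have hm : p n ≤ p i := h.antitone hi.le
  rw [← sum_range_add_sum_Ico _ hm, ← sum_range_add_sum_Ico _ hm, add_right_comm, mul_sum,
    ← sum_add_distrib]
  congr 1
  · refine sum_congr rfl fun j hj => ?_
    have hj := mem_range.mp hj
    rw [h.min_succ_eq_of_lt n hj, min_eq_left ((h n j).mpr hj).le]
    simp only [Nat.cast_add, Nat.cast_one, zpow_sub₀ hx, zpow_add₀ hx, zpow_neg, zpow_natCast,
      zpow_one]
    field_simp
    ring
  · refine sum_congr rfl fun j hj => ?_
    have hj := (mem_Ico.mp hj).1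
    rw [h.min_eq_of_le n hj n.le_succ, h.min_eq_of_le n hj le_rfl]

theorem hookSum_succ (hx : x ≠ 0) :
    hookSum x p c (n + 1) = hookSum x p c n
      + x ^ (n : ℤ) * (1 - x⁻¹) * (∑ i ∈ range n, x ^ ((p i : ℤ) - i))
          * ∑ j ∈ range (p n), x ^ (-(j : ℤ))
      + x ^ (p n : ℤ) * ∑ j ∈ range (p n), x ^ (-(j : ℤ)) := by
  have hlast : ∑ j ∈ range (p n), x ^ ((p n : ℤ) + (min (n + 1) (c j) : ℕ) - n - j - 1)
      = x ^ (p n : ℤ) * ∑ j ∈ range (p n), x ^ (-(j : ℤ)) := by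
    rw [mul_sum]
    refine sum_congr rfl fun j hj => ?_
    rw [h.min_succ_eq_of_lt n (mem_range.mp hj), ← zpow_add₀ hx]
    congr 1
    push_cast
    ring
  rw [hookSum, sum_range_succ, hlast,
    sum_congr rfl fun i hi => h.sum_row_succ n hx (mem_range.mp hi), sum_add_distrib, hookSum]
  simp only [← sum_mul]
  ring

theorem hookSum_add_hookSum_inv (hx : x ≠ 0) :
    hookSum x p c n + hookSum x⁻¹ p c n
      = contentSum x p n + contentSum x⁻¹ p n
        - (x - 1) * (x⁻¹ - 1) * contentSum x p n * contentSum x⁻¹ p n := by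
  induction n with
  | zero => simp [hookSum, contentSum]
  | succ n ih =>
    have hx' : x⁻¹ ≠ 0 := inv_ne_zero hx
    have hrow := sub_one_mul_contentSum_inv p n hx
    have hrow' := sub_one_mul_contentSum_inv p n hx'
    have hcol := inv_sub_one_mul_sum_zpow_neg (x := x) (p n)
    have hcol' := inv_sub_one_mul_sum_zpow_neg (x := x⁻¹) (p n)
    have hG := inv_sub_one_mul_sum_zpow_neg (x := x) n
    have hG' := inv_sub_one_mul_sum_zpow_neg (x := x⁻¹) n
    rw [inv_inv] at hrow' hcol' hG'
    rw [sum_sub_distrib] at hrow hrow'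
    rw [h.hookSum_succ n hx, h.hookSum_succ n hx', contentSum_succ p n hx,
      contentSum_succ p n hx', inv_inv]
    simp only [inv_zpow', neg_neg] at *
    set g := ∑ j ∈ range (p n), x ^ (-(j : ℤ))
    set g' := ∑ j ∈ range (p n), x ^ (j : ℤ)
    set N := x ^ (n : ℤ)
    set N' := x ^ (-(n : ℤ))
    have hN : N * N' = 1 := by rw [← zpow_add₀ hx]; simp
    have hX : x * x⁻¹ = 1 := mul_inv_cancel₀ hx
    linear_combination ih - N * (1 - x⁻¹) * g * hrow - N' * (1 - x) * g' * hrow' - N * g * hG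
      - N' * g' * hG' - g * hcol' - g' * hcol
      + (g * g' * (x * x⁻¹ - x - x⁻¹ + 1) - g - g') * hN + g * g' * hX

end IsConjugate

end CharacterIdentity

theorem lt_card_filter_range_iff {P : ℕ → Prop} [DecidablePred P] {N i : ℕ}
    (hP : ∀ ⦃a b⦄, a ≤ b → P b → P a) (hN : ∀ a, P a → a < N) :
    i < #{a ∈ range N | P a} ↔ P i := by
  constructor
  · intro hi
    by_contra hPi
    have hsub : {a ∈ range N | P a} ⊆ range i := fun a ha =>
      mem_range.mpr (lt_of_not_ge fun hia => hPi (hP hia (mem_filter.mp ha).2))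
    have := card_le_card hsub
    rw [card_range] at this
    omega
  · intro hPi
    have hsub : range (i + 1) ⊆ {a ∈ range N | P a} := fun a ha => by
      have hai : a ≤ i := Nat.lt_succ_iff.mp (mem_range.mp ha)
      exact mem_filter.mpr ⟨mem_range.mpr (hai.trans_lt (hN i hPi)), hP hai hPi⟩
    simpa using card_le_card hsub

namespace Ptn

variable (μ : Ptn)

theorem succ_le_size {i : ℕ} (h : μ.parts i ≠ 0) : i + 1 ≤ μ.size := by
  have hsub : range (i + 1) ⊆ μ.parts.support := fun k hk =>
    Finsupp.mem_support_iff.mpr fun hk0 =>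
      h (Nat.eq_zero_of_le_zero (hk0 ▸ μ.antitone' (Nat.lt_succ_iff.mp (mem_range.mp hk))))
  calc i + 1 ≤ ∑ k ∈ range (i + 1), μ.parts k := by
        simpa using card_nsmul_le_sum (range (i + 1)) μ.parts 1 fun k hk =>
          Nat.one_le_iff_ne_zero.mpr (Finsupp.mem_support_iff.mp (hsub hk))
    _ ≤ μ.size := sum_le_sum_of_subset hsub

theorem parts_le_size (i : ℕ) : μ.parts i ≤ μ.size := by
  by_cases h : μ.parts i = 0
  · simp [h]
  · exact single_le_sum (fun _ _ => Nat.zero_le _) (Finsupp.mem_support_iff.mpr h)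

theorem lt_conj_iff {i j : ℕ} : i < μ.conj j ↔ j < μ.parts i :=
  lt_card_filter_range_iff (fun _ _ hab h => h.trans_le (μ.antitone' hab))
    fun _ h => Nat.lt_succ_of_lt (μ.succ_le_size (Nat.ne_zero_of_lt h))

theorem isConjugate : IsConjugate μ.parts μ.conj := fun _ _ => μ.lt_conj_iff

theorem conj_le_len (j : ℕ) : μ.conj j ≤ μ.len := μ.isConjugate.symm.antitone (Nat.zero_le j)

theorem conj_eq_zero_of_le {j : ℕ} (h : μ.parts 0 ≤ j) : μ.conj j = 0 := by
  by_contra hj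
  exact absurd (μ.lt_conj_iff.mp (Nat.pos_of_ne_zero hj)) (not_lt.mpr h)

theorem mem_cells {c : ℕ × ℕ} : c ∈ μ.cells ↔ c.2 < μ.parts c.1 := by
  refine ⟨fun hc => (mem_filter.mp hc).2, fun hc => mem_filter.mpr ⟨?_, hc⟩⟩
  have := μ.succ_le_size (i := c.1) (by omega)
  have := μ.parts_le_size c.1
  exact mem_product.mpr ⟨mem_range.mpr (by omega), mem_range.mpr (by omega)⟩

theorem sum_cells_eq_sum_rows {M : Type*} [AddCommMonoid M] (f : ℕ × ℕ → M) :
    ∑ c ∈ μ.cells, f c = ∑ i ∈ range μ.len, ∑ j ∈ range (μ.parts i), f (i, j) :=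
  sum_finset_product _ _ _ fun c => by
    rw [mem_cells, mem_range, mem_range, len, lt_conj_iff]
    omega

theorem sum_cells_eq_sum_cols {M : Type*} [AddCommMonoid M] (f : ℕ × ℕ → M) :
    ∑ c ∈ μ.cells, f c = ∑ j ∈ range (μ.parts 0), ∑ i ∈ range (μ.conj j), f (i, j) :=
  sum_finset_product_right _ _ _ fun c => by
    rw [mem_cells, mem_range, mem_range, lt_conj_iff]
    exact ⟨fun h => ⟨h.trans_le (μ.antitone' (Nat.zero_le _)), h⟩, And.right⟩

variable {K : Type*} [Field K] {x : K}

theorem contentSum_inv_conj (x : K) :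
    contentSum x⁻¹ μ.conj (μ.parts 0) = contentSum x μ.parts μ.len := by
  rw [contentSum, contentSum, ← sum_cells_eq_sum_rows μ fun c => x ^ ((c.1 : ℤ) - c.2),
    sum_cells_eq_sum_cols]
  simp only [inv_zpow', neg_sub]

theorem sub_one_mul_contentSum (hx : x ≠ 0) :
    (x - 1) * contentSum x μ.parts μ.len
      = ∑ j ∈ range (μ.parts 0), (x ^ ((μ.conj j : ℤ) - j) - x ^ (-(j : ℤ))) := by
  rw [← μ.contentSum_inv_conj, sub_one_mul_contentSum_inv _ _ hx]

theorem sum_cells_zpow_hook (x : K) :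
    ∑ c ∈ μ.cells, x ^ μ.hook c = hookSum x μ.parts μ.conj μ.len := by
  rw [sum_cells_eq_sum_rows, hookSum]
  refine sum_congr rfl fun i _ => sum_congr rfl fun j _ => ?_
  rw [min_eq_right (μ.conj_le_len j), hook, arm, leg]
  ring_nf

theorem sum_cells_zpow_hook_add_zpow_neg_hook (hx : x ≠ 0) :
    ∑ c ∈ μ.cells, (x ^ μ.hook c + x ^ (-μ.hook c))
      = contentSum x μ.parts μ.len + contentSum x⁻¹ μ.parts μ.len
        - (x - 1) * (x⁻¹ - 1) * contentSum x μ.parts μ.len * contentSum x⁻¹ μ.parts μ.len := by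
  simp only [sum_add_distrib, ← inv_zpow', sum_cells_zpow_hook]
  exact μ.isConjugate.hookSum_add_hookSum_inv _ hx

end Ptn

theorem summable_norm_zpow_of_le {𝕜 : Type*} [NormedDivisionRing 𝕜] {x : 𝕜} (hx : 1 < ‖x‖)
    {e : ℕ → ℤ} (k : ℤ) (he : ∀ j, e j ≤ k - j) : Summable fun j => ‖x ^ e j‖ := by
  have hx0 : (0 : ℝ) < ‖x‖ := one_pos.trans hx
  refine .of_nonneg_of_le (fun _ => norm_nonneg _) (fun j => ?_)
    ((summable_geometric_of_lt_one (inv_nonneg.mpr hx0.le) (inv_lt_one_of_one_lt₀ hx)).mul_left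
      (‖x‖ ^ k))
  rw [norm_zpow, inv_pow, ← zpow_natCast, ← zpow_neg, ← zpow_add₀ hx0.ne', ← sub_eq_add_neg]
  exact zpow_le_zpow_right₀ hx.le (he j)

section Series

variable {𝕜 : Type*} [NormedField 𝕜] {x : 𝕜}

theorem tsum_zpow_neg_succ (hx : 1 < ‖x‖) : ∑' i : ℕ, x ^ (-((i : ℤ) + 1)) = (x - 1)⁻¹ := by
  have hx0 : x ≠ 0 := norm_pos_iff.mp (one_pos.trans hx)
  have hx1 : x - 1 ≠ 0 := sub_ne_zero.mpr fun h => by simp [h] at hx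
  have hterm (i : ℕ) : x ^ (-((i : ℤ) + 1)) = x⁻¹ * x⁻¹ ^ i := by
    rw [neg_add, zpow_add₀ hx0, zpow_neg_one, zpow_neg, zpow_natCast, inv_pow, mul_comm]
  rw [tsum_congr hterm, tsum_mul_left,
    tsum_geometric_of_norm_lt_one (by simpa using inv_lt_one_of_one_lt₀ hx)]
  field_simp

theorem Ptn.tsum_zpow_conj_sub (μ : Ptn) (hx : 1 < ‖x‖) :
    ∑' j : ℕ, x ^ ((μ.conj j : ℤ) - j) = (1 - x⁻¹)⁻¹ + (x - 1) * contentSum x μ.parts μ.len := by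
  have hx0 : x ≠ 0 := norm_pos_iff.mp (one_pos.trans hx)
  have hgeom : ‖x⁻¹‖ < 1 := by simpa using inv_lt_one_of_one_lt₀ hx
  have hsplit (j : ℕ) : x ^ ((μ.conj j : ℤ) - j)
      = x⁻¹ ^ j + (x ^ ((μ.conj j : ℤ) - j) - x ^ (-(j : ℤ))) := by
    rw [inv_pow, ← zpow_natCast, ← zpow_neg, add_sub_cancel]
  have htail : ∀ j ∉ range (μ.parts 0), x ^ ((μ.conj j : ℤ) - j) - x ^ (-(j : ℤ)) = 0 :=
    fun j hj => by
      rw [μ.conj_eq_zero_of_le (not_lt.mp (mem_range.not.mp hj)), Nat.cast_zero, zero_sub,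
        sub_self]
  rw [tsum_congr hsplit, Summable.tsum_add (summable_geometric_of_norm_lt_one hgeom)
    (summable_of_ne_finset_zero htail), tsum_geometric_of_norm_lt_one hgeom, tsum_eq_sum htail,
    μ.sub_one_mul_contentSum hx0]

end Series

/-- Indices are 0-indexed: the 1-indexed `(i, j)` is `(i₀+1, j₀+1)`, so `x^{1-j} = x^{-j₀}`,
`x^{λᵗ_j - i} = x^{λ.conj j₀ - (i₀+1)}`, and `x^{-i} = x^{-(i₀+1)}`. -/
theorem stmt2 (lam : Ptn) (x : ℂ) (hx : 1 < ‖x‖) :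
    (∀ i ∈ Finset.range lam.len,
        Summable fun j : ℕ =>
          ‖(x ^ (lam.parts i : ℤ) - 1) * x ^ (-(j : ℤ)) * x ^ ((lam.conj j : ℤ) - ((i : ℤ) + 1))‖)
    ∧ (∀ j ∈ Finset.range (lam.parts 0),
        Summable fun i : ℕ =>
          ‖(x ^ (lam.conj j : ℤ) - 1) * x ^ (-(j : ℤ)) * x ^ (-((i : ℤ) + 1))‖)
    ∧ (∑ i ∈ Finset.range lam.len, ∑' j : ℕ,
          (x ^ (lam.parts i : ℤ) - 1) * x ^ (-(j : ℤ)) * x ^ ((lam.conj j : ℤ) - ((i : ℤ) + 1)))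
        + (∑ j ∈ Finset.range (lam.parts 0), ∑' i : ℕ,
            (x ^ (lam.conj j : ℤ) - 1) * x ^ (-(j : ℤ)) * x ^ (-((i : ℤ) + 1)))
      = ∑ c ∈ lam.cells, (x ^ lam.hook c + x ^ (-(lam.hook c))) := by
  have hx0 : x ≠ 0 := norm_pos_iff.mp (one_pos.trans hx)
  have hx1 : x - 1 ≠ 0 := sub_ne_zero.mpr fun h => by simp [h] at hx
  have hrow (i j : ℕ) :
      (x ^ (lam.parts i : ℤ) - 1) * x ^ (-(j : ℤ)) * x ^ ((lam.conj j : ℤ) - ((i : ℤ) + 1))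
        = x⁻¹ * (x ^ ((lam.parts i : ℤ) - i) - x ^ (-(i : ℤ))) * x ^ ((lam.conj j : ℤ) - j) := by
    simp only [zpow_sub₀ hx0, zpow_add₀ hx0, zpow_neg, zpow_one]
    field_simp
  have hcol (j : ℕ) : (x ^ (lam.conj j : ℤ) - 1) * x ^ (-(j : ℤ))
      = x ^ ((lam.conj j : ℤ) - j) - x ^ (-(j : ℤ)) := by
    rw [sub_one_mul, ← zpow_add₀ hx0, ← sub_eq_add_neg]
  refine ⟨fun i _ => ?_, fun j _ => ?_, ?_⟩
  · simp_rw [hrow i, norm_mul]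
    exact (summable_norm_zpow_of_le hx lam.len fun j => by
      have := lam.conj_le_len j; omega).mul_left _
  · simp_rw [norm_mul]
    exact (summable_norm_zpow_of_le hx (-1) fun i => by omega).mul_left _
  · simp_rw [hrow, hcol, tsum_mul_left, tsum_zpow_neg_succ hx, lam.tsum_zpow_conj_sub hx,
      ← sum_mul, ← mul_sum]
    rw [← lam.sub_one_mul_contentSum hx0, ← sub_one_mul_contentSum_inv _ _ hx0,
      lam.sum_cells_zpow_hook_add_zpow_neg_hook hx0]
    field_simp
    ring
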